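/- Let A₁, …, A_k be pairwise commuting N×N matrices with nonnegative real entries. Then there exists a nonzero nonnegative vector w and nonnegative reals λ₁, …, λ_k with Aᵢ w = λᵢ w for all i. -/

import Mathlib

open Finset Matrix

lemma mulVec_nn {n : ℕ} {M : Matrix (Fin n) (Fin n) ℝ} (hM : ∀ r s, 0 ≤ M r s)
    {v : Fin n → ℝ} (hv : ∀ r, 0 ≤ v r) : ∀ r, 0 ≤ M.mulVec v r := by
  intro r
  rw [Matrix.mulVec, dotProduct]
  exact Finset.sum_nonneg fun t _ => mul_nonneg (hM r t) (hv t)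

lemma mul_nn {n : ℕ} {M N : Matrix (Fin n) (Fin n) ℝ} (hM : ∀ r s, 0 ≤ M r s)
    (hN : ∀ r s, 0 ≤ N r s) : ∀ r s, 0 ≤ (M * N) r s := by
  intro r s
  rw [Matrix.mul_apply]
  exact Finset.sum_nonneg fun t _ => mul_nonneg (hM r t) (hN t s)

lemma pow_nn {n : ℕ} {M : Matrix (Fin n) (Fin n) ℝ} (hM : ∀ r s, 0 ≤ M r s)
    (m : ℕ) : ∀ r s, 0 ≤ (M ^ m) r s := by
  induction m with
  | zero => intro r s; simp [Matrix.one_apply]; positivity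
  | succ m ih => rw [pow_succ]; exact mul_nn ih hM

def Irr {n : ℕ} (B : Matrix (Fin n) (Fin n) ℝ) : Prop :=
  ∀ S : Finset (Fin n), S.Nonempty → S ≠ Finset.univ → ∃ r ∉ S, ∃ s ∈ S, 0 < B r s

lemma supp_def {n : ℕ} (v : Fin n → ℝ) (hv : ∀ r, 0 ≤ v r) (r : Fin n) :
    r ∉ Finset.univ.filter (fun t => 0 < v t) ↔ v r = 0 := by
  simp only [Finset.mem_filter, Finset.mem_univ, true_and, not_lt]
  constructor
  · intro h; linarith [hv r]
  · intro h; rw [h]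

lemma pos_iterate {n : ℕ} (hn : 0 < n) {B : Matrix (Fin n) (Fin n) ℝ}
    (hB : ∀ r s, 0 ≤ B r s) (hirr : Irr B)
    {u : Fin n → ℝ} (hu : ∀ r, 0 ≤ u r) (hu0 : u ≠ 0) :
    ∀ r, 0 < (((1 : Matrix (Fin n) (Fin n) ℝ) + B) ^ (n - 1)).mulVec u r := by
  set M : Matrix (Fin n) (Fin n) ℝ := 1 + B with hM
  have hMnn : ∀ r s, 0 ≤ M r s := by
    intro r s
    simp only [hM, Matrix.add_apply, Matrix.one_apply]
    have := hB r s
    split <;> linarith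
  -- step: v ≤ M.mulVec v
  have step_le : ∀ v : Fin n → ℝ, (∀ r, 0 ≤ v r) → ∀ r, v r ≤ M.mulVec v r := by
    intro v hv r
    have : M.mulVec v = v + B.mulVec v := by
      rw [hM, Matrix.add_mulVec, Matrix.one_mulVec]
    rw [this]
    have := mulVec_nn hB hv r
    simp only [Pi.add_apply]; linarith
  -- main induction on m
  have key : ∀ m : ℕ, ∀ v : Fin n → ℝ, (∀ r, 0 ≤ v r) →
      (Finset.univ.filter (fun t => 0 < v t)).Nonempty →
      (Finset.univ.filter (fun t => 0 < v t)).card + m ≤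
        (Finset.univ.filter (fun t => 0 < (M ^ m).mulVec v t)).card ∨
      (Finset.univ.filter (fun t => 0 < (M ^ m).mulVec v t)) = Finset.univ := by
    intro m
    induction m with
    | zero =>
      intro v hv hne
      left
      simp [Matrix.one_mulVec]
    | succ m ih =>
      intro v hv hne
      have hvm : ∀ r, 0 ≤ (M ^ m).mulVec v r := mulVec_nn (pow_nn hMnn m) hv
      have hpow : (M ^ (m+1)).mulVec v = M.mulVec ((M ^ m).mulVec v) := by
        rw [pow_succ', Matrix.mulVec_mulVec]
      set vm := (M ^ m).mulVec v with hvmdef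
      have hmono : Finset.univ.filter (fun t => 0 < vm t) ⊆
          Finset.univ.filter (fun t => 0 < (M ^ (m+1)).mulVec v t) := by
        intro t ht
        simp only [Finset.mem_filter, Finset.mem_univ, true_and] at ht ⊢
        rw [hpow]
        exact lt_of_lt_of_le ht (step_le vm hvm t)
      rcases ih v hv hne with h | h
      · rw [← hvmdef] at h
        by_cases hfull : Finset.univ.filter (fun t => 0 < vm t) = Finset.univ
        · right
          apply Finset.eq_univ_of_forall
          intro t
          apply hmono
          rw [hfull]
          exact Finset.mem_univ t
        · -- strict growth
          have hSne : (Finset.univ.filter (fun t => 0 < vm t)).Nonempty := by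
            rw [← Finset.card_pos]
            have := Finset.card_pos.mpr hne
            omega
          obtain ⟨r, hr, s, hs, hBrs⟩ := hirr _ hSne hfull
          have hr' : 0 < (M ^ (m+1)).mulVec v r := by
            rw [hpow]
            have h1 : B.mulVec vm r ≤ M.mulVec vm r := by
              have : M.mulVec vm = vm + B.mulVec vm := by
                rw [hM, Matrix.add_mulVec, Matrix.one_mulVec]
              rw [this]; simp only [Pi.add_apply]; linarith [hvm r]
            have h2 : 0 < B.mulVec vm r := by
              rw [Matrix.mulVec, dotProduct]
              have hs' : 0 < vm s := by
                simpa using (Finset.mem_filter.mp hs).2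
              have : 0 < B r s * vm s := mul_pos hBrs hs'
              have hle : B r s * vm s ≤ ∑ t, B r t * vm t :=
                Finset.single_le_sum (fun t _ => mul_nonneg (hB r t) (hvm t))
                  (Finset.mem_univ s)
              linarith
            linarith
          left
          calc (Finset.univ.filter (fun t => 0 < v t)).card + (m + 1)
              = ((Finset.univ.filter (fun t => 0 < v t)).card + m) + 1 := by ring
            _ ≤ (Finset.univ.filter (fun t => 0 < vm t)).card + 1 := by omega
            _ ≤ (Finset.univ.filter (fun t => 0 < (M ^ (m+1)).mulVec v t)).card := by
                apply Finset.card_lt_card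
                rw [Finset.ssubset_iff_of_subset hmono]
                refine ⟨r, ?_, ?_⟩
                · simp only [Finset.mem_filter, Finset.mem_univ, true_and]; exact hr'
                · exact hr
      · right
        apply Finset.eq_univ_of_forall
        intro t
        apply hmono
        rw [hvmdef, h]
        exact Finset.mem_univ t
  -- apply with m = n - 1
  have hne : (Finset.univ.filter (fun t => 0 < u t)).Nonempty := by
    by_contra h
    apply hu0
    funext r
    rw [Finset.not_nonempty_iff_eq_empty] at h
    have : r ∉ Finset.univ.filter (fun t => 0 < u t) := by rw [h]; exact Finset.notMem_empty r
    exact (supp_def u hu r).mp this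
  have hfull : Finset.univ.filter (fun t => 0 < (M ^ (n-1)).mulVec u t) = Finset.univ := by
    rcases key (n-1) u hu hne with h | h
    · apply Finset.eq_univ_of_card
      have h1 : 1 ≤ (Finset.univ.filter (fun t => 0 < u t)).card := Finset.card_pos.mpr hne
      have h2 : (Finset.univ.filter (fun t => 0 < (M ^ (n-1)).mulVec u t)).card ≤ n := by
        calc (Finset.univ.filter (fun t => 0 < (M ^ (n-1)).mulVec u t)).card
            ≤ (Finset.univ : Finset (Fin n)).card := Finset.card_filter_le _ _
          _ = n := by simp
      simp only [Fintype.card_fin]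
      omega
    · exact h
  intro r
  have : r ∈ Finset.univ.filter (fun t => 0 < (M ^ (n-1)).mulVec u t) := by
    rw [hfull]; exact Finset.mem_univ r
  simpa using this

lemma perron {n : ℕ} (hn : 0 < n) {B : Matrix (Fin n) (Fin n) ℝ}
    (hB : ∀ r s, 0 ≤ B r s) (hirr : Irr B) :
    ∃ ρ : ℝ, 0 ≤ ρ ∧ ∃ v : Fin n → ℝ, (∀ r, 0 < v r) ∧ B.mulVec v = ρ • v := by
  haveI : NeZero n := ⟨hn.ne'⟩
  set M : Matrix (Fin n) (Fin n) ℝ := ((1 : Matrix (Fin n) (Fin n) ℝ) + B) ^ (n - 1) with hMdef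
  have hMnn : ∀ r s, 0 ≤ M r s := by
    apply pow_nn
    intro r s
    simp only [Matrix.add_apply, Matrix.one_apply]
    have := hB r s
    split <;> linarith
  set Δ : Set (Fin n → ℝ) := stdSimplex ℝ (Fin n) with hΔ
  have hΔne : ∀ u ∈ Δ, (∀ r, 0 ≤ u r) ∧ u ≠ 0 := by
    intro u hu
    refine ⟨hu.1, ?_⟩
    intro h
    have := hu.2
    rw [h] at this
    simp at this
  have hMpos : ∀ u ∈ Δ, ∀ r, 0 < M.mulVec u r := by
    intro u hu r
    exact pos_iterate hn hB hirr (hΔne u hu).1 (hΔne u hu).2 r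
  have hsum_pos : ∀ u ∈ Δ, 0 < ∑ r, M.mulVec u r := by
    intro u hu
    exact Finset.sum_pos (fun r _ => hMpos u hu r) Finset.univ_nonempty
  set g : (Fin n → ℝ) → (Fin n → ℝ) := fun u => (∑ r, M.mulVec u r)⁻¹ • M.mulVec u with hg
  set K : Set (Fin n → ℝ) := g '' Δ with hK
  -- K ⊆ Δ and positivity on K
  have hKpos : ∀ v ∈ K, ∀ r, 0 < v r := by
    rintro v ⟨u, hu, rfl⟩ r
    exact smul_pos (inv_pos.mpr (hsum_pos u hu)) (hMpos u hu r)
  have hKΔ : K ⊆ Δ := by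
    rintro v ⟨u, hu, rfl⟩
    constructor
    · intro r
      exact le_of_lt (smul_pos (inv_pos.mpr (hsum_pos u hu)) (hMpos u hu r))
    · simp only [hg, Pi.smul_apply, smul_eq_mul]
      rw [← Finset.mul_sum]
      exact inv_mul_cancel₀ (hsum_pos u hu).ne'
  -- continuity of mulVec
  have hmulVec_cont : ∀ C : Matrix (Fin n) (Fin n) ℝ, Continuous fun v : Fin n → ℝ => C.mulVec v := by
    intro C
    apply continuous_pi
    intro r
    simp only [Matrix.mulVec, dotProduct]
    exact continuous_finset_sum _ fun t _ => (continuous_const.mul (continuous_apply t))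
  have hgcont : ContinuousOn g Δ := by
    refine ContinuousOn.smul (f := fun u => (∑ r, M.mulVec u r)⁻¹) (g := fun u => M.mulVec u) ?_ ?_
    · apply ContinuousOn.inv₀
      · exact (continuous_finset_sum Finset.univ fun r _ => (continuous_apply r).comp (hmulVec_cont M)).continuousOn
      · intro u hu
        exact (hsum_pos u hu).ne'
    · exact (hmulVec_cont M).continuousOn
  have hKcomp : IsCompact K := (isCompact_stdSimplex ℝ (Fin n)).image_of_continuousOn hgcont
  have hKne : K.Nonempty := by
    have : Δ.Nonempty := ⟨_, ite_eq_mem_stdSimplex ℝ (Classical.arbitrary (Fin n))⟩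
    exact this.image g
  -- the Collatz-Wielandt function
  set f : (Fin n → ℝ) → ℝ :=
    fun v => Finset.univ.inf' Finset.univ_nonempty (fun r => B.mulVec v r / v r) with hf
  have hfcont : ContinuousOn f K := by
    apply ContinuousOn.finset_inf'_apply
    intro r _
    apply ContinuousOn.div
    · exact ((continuous_apply r).comp (hmulVec_cont B)).continuousOn
    · exact (continuous_apply r).continuousOn
    · intro v hv
      exact (hKpos v hv r).ne'
  obtain ⟨v, hvK, hmax⟩ := hKcomp.exists_isMaxOn hKne hfcont
  set ρ := f v with hρ
  have hvpos : ∀ r, 0 < v r := hKpos v hvK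
  have hρ0 : 0 ≤ ρ := by
    apply Finset.le_inf'
    intro r _
    exact div_nonneg (mulVec_nn hB (fun t => (hvpos t).le) r) (hvpos r).le
  have hge : ∀ r, ρ * v r ≤ B.mulVec v r := by
    intro r
    have h1 : ρ ≤ B.mulVec v r / v r := Finset.inf'_le _ (Finset.mem_univ r)
    exact (le_div_iff₀ (hvpos r)).mp h1
  refine ⟨ρ, hρ0, v, hvpos, ?_⟩
  by_contra hne
  set u : Fin n → ℝ := B.mulVec v - ρ • v with hu
  have hunn : ∀ r, 0 ≤ u r := by
    intro r
    simp only [hu, Pi.sub_apply, Pi.smul_apply, smul_eq_mul]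
    linarith [hge r]
  have hu0 : u ≠ 0 := by
    intro h
    apply hne
    funext r
    have h2 : u r = 0 := congrFun h r
    simp only [hu, Pi.sub_apply] at h2
    linarith
  -- w = g v
  set w := g v with hw
  have hwK : w ∈ K := ⟨v, hKΔ hvK, rfl⟩
  have hcomm : B * M = M * B := by
    rw [hMdef]
    exact (Commute.add_right (Commute.one_right B) (Commute.refl B)).pow_right (n-1) |>.eq
  set c : ℝ := (∑ r, M.mulVec v r) with hc
  have hcpos : 0 < c := hsum_pos v (hKΔ hvK)
  have hweq : B.mulVec w = ρ • w + c⁻¹ • M.mulVec u := by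
    have h1 : B.mulVec w = c⁻¹ • (B * M).mulVec v := by
      rw [hw, hg]
      simp only [Matrix.mulVec_smul]
      rw [Matrix.mulVec_mulVec]
    rw [h1, hcomm, ← Matrix.mulVec_mulVec]
    have h2 : B.mulVec v = ρ • v + u := by
      funext r
      simp only [hu, Pi.add_apply, Pi.sub_apply]
      ring
    rw [h2, Matrix.mulVec_add, Matrix.mulVec_smul]
    rw [smul_add]
    congr 1
    rw [hw, hg, smul_comm]
  have hMu_pos : ∀ r, 0 < M.mulVec u r := pos_iterate hn hB hirr hunn hu0
  have hwpos : ∀ r, 0 < w r := hKpos w hwK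
  have hfw : ρ < f w := by
    refine (Finset.lt_inf'_iff _).mpr ?_
    intro r _
    rw [lt_div_iff₀ (hwpos r)]
    have := congrFun hweq r
    simp only [Pi.add_apply, Pi.smul_apply, smul_eq_mul] at this
    have h3 : 0 < c⁻¹ * M.mulVec u r := mul_pos (inv_pos.mpr hcpos) (hMu_pos r)
    rw [this]
    linarith
  exact absurd (hmax hwK) (by simpa using hfw.not_ge)

lemma perron_unique {n : ℕ} (hn : 0 < n) {B : Matrix (Fin n) (Fin n) ℝ}
    (hB : ∀ r s, 0 ≤ B r s) (hirr : Irr B) {ρ : ℝ} {v : Fin n → ℝ}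
    (hv : ∀ r, 0 < v r) (hveq : B.mulVec v = ρ • v) {w : Fin n → ℝ}
    (hw : ∀ r, 0 ≤ w r) (hweq : B.mulVec w = ρ • w) :
    ∃ t : ℝ, 0 ≤ t ∧ w = t • v := by
  haveI : NeZero n := ⟨hn.ne'⟩
  set t : ℝ := Finset.univ.inf' Finset.univ_nonempty (fun r => w r / v r) with ht
  obtain ⟨r0, _, hr0⟩ := Finset.exists_mem_eq_inf' (Finset.univ_nonempty) (fun r => w r / v r)
  have ht0 : 0 ≤ t := by
    apply Finset.le_inf'
    intro r _
    exact div_nonneg (hw r) (hv r).le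
  set u : Fin n → ℝ := w - t • v with hu
  have hunn : ∀ r, 0 ≤ u r := by
    intro r
    have h1 : t ≤ w r / v r := Finset.inf'_le _ (Finset.mem_univ r)
    have h2 : t * v r ≤ w r := (le_div_iff₀ (hv r)).mp h1
    simp only [hu, Pi.sub_apply, Pi.smul_apply, smul_eq_mul]
    linarith
  have hur0 : u r0 = 0 := by
    simp only [hu, Pi.sub_apply, Pi.smul_apply, smul_eq_mul]
    rw [ht, hr0, div_mul_cancel₀ _ (hv r0).ne', sub_self]
  have hueq : B.mulVec u = ρ • u := by
    rw [hu, Matrix.mulVec_sub, Matrix.mulVec_smul, hveq, hweq, smul_sub, smul_comm]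
  have hu0 : u = 0 := by
    by_contra hu0
    have hSne : (Finset.univ.filter (fun r => 0 < u r)).Nonempty := by
      by_contra h
      apply hu0
      funext r
      rw [Finset.not_nonempty_iff_eq_empty] at h
      have : r ∉ Finset.univ.filter (fun r => 0 < u r) := by
        rw [h]; exact Finset.notMem_empty r
      exact (supp_def u hunn r).mp this
    have hSuniv : (Finset.univ.filter (fun r => 0 < u r)) ≠ Finset.univ := by
      intro h
      have : r0 ∈ Finset.univ.filter (fun r => 0 < u r) := by
        rw [h]; exact Finset.mem_univ r0
      simp only [Finset.mem_filter, Finset.mem_univ, true_and] at this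
      rw [hur0] at this
      exact lt_irrefl 0 this
    obtain ⟨r, hr, s, hs, hBrs⟩ := hirr _ hSne hSuniv
    have hur : u r = 0 := (supp_def u hunn r).mp hr
    have hus : 0 < u s := by simpa using (Finset.mem_filter.mp hs).2
    have h1 : B.mulVec u r = 0 := by
      rw [hueq]
      simp [hur]
    have h2 : 0 < B.mulVec u r := by
      rw [Matrix.mulVec, dotProduct]
      have hle : B r s * u s ≤ ∑ x, B r x * u x :=
        Finset.single_le_sum (fun x _ => mul_nonneg (hB r x) (hunn x)) (Finset.mem_univ s)
      have := mul_pos hBrs hus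
      linarith
    linarith
  refine ⟨t, ht0, ?_⟩
  have huu : w - t • v = 0 := hu0
  funext r
  have h5 := congrFun huu r
  simp only [Pi.sub_apply, Pi.zero_apply, Pi.smul_apply, smul_eq_mul] at h5
  show w r = t * v r
  linarith

theorem main : ∀ n : ℕ, 0 < n → ∀ k (A : Fin k → Matrix (Fin n) (Fin n) ℝ),
    (∀ i r s, 0 ≤ A i r s) → (∀ i j, A i * A j = A j * A i) →
    ∃ w : Fin n → ℝ, (∀ r, 0 ≤ w r) ∧ (∃ r, 0 < w r) ∧
      ∃ lam : Fin k → ℝ, ∀ i, 0 ≤ lam i ∧ (A i).mulVec w = lam i • w := by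
  intro n
  induction n using Nat.strong_induction_on with
  | _ n ih =>
  intro hn k A hA hcomm
  set B : Matrix (Fin n) (Fin n) ℝ := ∑ i, A i with hBdef
  have hBnn : ∀ r s, 0 ≤ B r s := by
    intro r s
    rw [hBdef, Matrix.sum_apply]
    exact Finset.sum_nonneg fun i _ => hA i r s
  have hABle : ∀ i r s, A i r s ≤ B r s := by
    intro i r s
    rw [hBdef, Matrix.sum_apply]
    exact Finset.single_le_sum (fun j _ => hA j r s) (Finset.mem_univ i)
  by_cases hirr : Irr B
  · -- irreducible case
    obtain ⟨ρ, hρ0, v, hvpos, hveq⟩ := perron hn hBnn hirr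
    refine ⟨v, fun r => (hvpos r).le, ⟨⟨0, hn⟩, hvpos _⟩, ?_⟩
    have key : ∀ i, ∃ t : ℝ, 0 ≤ t ∧ (A i).mulVec v = t • v := by
      intro i
      apply perron_unique hn hBnn hirr hvpos hveq
        (mulVec_nn (hA i) (fun r => (hvpos r).le))
      have hcommB : B * A i = A i * B := by
        rw [hBdef, Finset.sum_mul, Finset.mul_sum]
        exact Finset.sum_congr rfl fun j _ => hcomm j i
      rw [Matrix.mulVec_mulVec, hcommB, ← Matrix.mulVec_mulVec, hveq, Matrix.mulVec_smul]
    choose lam hlam using key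
    exact ⟨lam, fun i => ⟨(hlam i).1, (hlam i).2⟩⟩
  · -- reducible case
    rw [Irr] at hirr
    push_neg at hirr
    obtain ⟨S, hSne, hSuniv, hclosed⟩ := hirr
    have hz : ∀ r, r ∉ S → ∀ s ∈ S, B r s = 0 := by
      intro r hr s hs
      have h1 := hclosed r hr s hs
      have h2 := hBnn r s
      linarith
    have hAz : ∀ i r s, r ∉ S → s ∈ S → A i r s = 0 := by
      intro i r s hr hs
      have := hABle i r s
      have := hA i r s
      have := hz r hr s hs
      linarith
    set m := S.card with hm
    have hm0 : 0 < m := Finset.card_pos.mpr hSne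
    have hmlt : m < n := by
      have h1 : S.card ≤ n := by
        calc S.card ≤ (Finset.univ : Finset (Fin n)).card := Finset.card_le_card (Finset.subset_univ S)
          _ = n := by simp
      rcases lt_or_eq_of_le h1 with h | h
      · exact h
      · exfalso
        apply hSuniv
        apply Finset.eq_univ_of_card
        simpa using h
    set e := S.orderIsoOfFin (rfl : S.card = m) with he
    set A' : Fin k → Matrix (Fin m) (Fin m) ℝ := fun i a b => A i (e a) (e b) with hA'
    have hA'nn : ∀ i a b, 0 ≤ A' i a b := fun i a b => hA i _ _
    -- sums over S pulled back
    have hsum : ∀ (F : Fin n → ℝ), (∀ t, t ∉ S → F t = 0) →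
        ∑ t, F t = ∑ a : Fin m, F (e a) := by
      intro F hF
      rw [← Finset.sum_subset (Finset.subset_univ S) (fun t _ ht => hF t ht)]
      rw [← Finset.sum_coe_sort S F]
      exact Fintype.sum_equiv e.toEquiv.symm _ _ (fun x => by simp)
    have hmul : ∀ i j, ∀ a b, (A' i * A' j) a b = (A i * A j) (e a) (e b) := by
      intro i j a b
      rw [Matrix.mul_apply, Matrix.mul_apply]
      have hzero : ∀ t ∉ S, A i ((e a : Fin n)) t * A j t ((e b : Fin n)) = 0 := by
        intro t ht
        rw [hAz j t (e b) ht (e b).2, mul_zero]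
      rw [hsum _ hzero]
    have hcomm' : ∀ i j, A' i * A' j = A' j * A' i := by
      intro i j
      ext a b
      rw [hmul i j a b, hmul j i a b, hcomm i j]
    obtain ⟨w', hw'nn, ⟨a0, ha0⟩, lam, hlam⟩ := ih m hmlt hm0 k A' hA'nn hcomm'
    set w : Fin n → ℝ := fun r => if h : r ∈ S then w' (e.symm ⟨r, h⟩) else 0 with hw
    have hwS : ∀ (r : Fin n) (h : r ∈ S), w r = w' (e.symm ⟨r, h⟩) := by
      intro r h; simp [hw, h]
    have hwO : ∀ r, r ∉ S → w r = 0 := by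
      intro r h; simp [hw, h]
    have hwnn : ∀ r, 0 ≤ w r := by
      intro r
      by_cases h : r ∈ S
      · rw [hwS r h]; exact hw'nn _
      · rw [hwO r h]
    have hwa : ∀ a : Fin m, w (e a) = w' a := by
      intro a
      rw [hwS (e a) (e a).2]
      congr 1
      have : (⟨(e a : Fin n), (e a).2⟩ : {x // x ∈ S}) = e a := Subtype.ext rfl
      rw [this, OrderIso.symm_apply_apply]
    refine ⟨w, hwnn, ⟨e a0, by rw [hwa]; exact ha0⟩, lam, ?_⟩
    intro i
    refine ⟨(hlam i).1, ?_⟩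
    funext r
    have hsum2 : (A i).mulVec w r = ∑ a : Fin m, A i r (e a) * w' a := by
      rw [Matrix.mulVec, dotProduct]
      have hzero2 : ∀ t ∉ S, A i r t * w t = 0 := by
        intro t ht
        rw [hwO t ht, mul_zero]
      rw [hsum _ hzero2]
      exact Finset.sum_congr rfl fun a _ => by rw [hwa]
    by_cases h : r ∈ S
    · have h3 : (A' i).mulVec w' (e.symm ⟨r, h⟩) = (lam i • w') (e.symm ⟨r, h⟩) := by
        rw [(hlam i).2]
      rw [Matrix.mulVec, dotProduct] at h3
      have h4 : ∀ a : Fin m, A' i (e.symm ⟨r, h⟩) a = A i r (e a) := by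
        intro a
        simp only [hA']
        congr 2
        have := e.apply_symm_apply ⟨r, h⟩
        exact congrArg Subtype.val this
      rw [hsum2]
      simp only [Pi.smul_apply, smul_eq_mul] at h3 ⊢
      rw [hwS r h, ← h3]
      exact Finset.sum_congr rfl fun a _ => by rw [h4]
    · rw [hsum2]
      simp only [Pi.smul_apply, smul_eq_mul]
      rw [hwO r h, mul_zero]
      apply Finset.sum_eq_zero
      intro a _
      rw [hAz i r (e a) h (e a).2, zero_mul]

theorem stmt_1 {N k : ℕ} (hN : 0 < N)
    (A : Fin k → Matrix (Fin N) (Fin N) ℝ)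
    (hA : ∀ i r s, 0 ≤ A i r s)
    (hcomm : ∀ i j, A i * A j = A j * A i) :
    ∃ w : Fin N → ℝ, (∀ i, 0 ≤ w i) ∧ (∃ i, 0 < w i) ∧
      ∃ lam : Fin k → ℝ, ∀ i, 0 ≤ lam i ∧ (A i).mulVec w = lam i • w := by
  exact main N hN k A hA hcomm
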